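/- Define f₁(q) = 1 + (2q−1)/4 and f₂(q) = 1 + (2q−1)/4 + 4(q(1−q) − 1/6) on [0,1]. Then f₁ and f₂ are both probability densities on [0,1], and for every r ∈ [0,1/4), f₁(q₊(r)) − f₁(q₋(r)) = f₂(q₊(r)) − f₂(q₋(r)) = (1/2)√(1−4r), where q₊(r) = (1+√(1−4r))/2 and q₋(r) = (1−√(1−4r))/2. Consequently the two densities induce identical odd-budget majority voting curves while defining different measures. -/

import Mathlib

open MeasureTheory

/-!
Since `P_n(q) + P_n(1 - q) = 1`, the substitution `q ↦ 1 - q` gives `∫₀¹ P_n g = ∫₀¹ g - ∫₀¹ P_n g`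
for every `g` with `g (1 - q) = g q`, so `P_n` is orthogonal to every such `g` of mean zero. The
difference `f₂ - f₁ = 4 (q (1 - q) - 1/6)` is such a `g`; it is also invisible to the branch
asymmetry, because `q₊(r)` and `q₋(r)` are the two roots of `q (1 - q) = r`.
-/

/-- Odd-budget majority accuracy: `majP n q = ℙ(Bin(2n+1,q) ≥ n+1)`. -/
noncomputable def majP (n : ℕ) (q : ℝ) : ℝ :=
  ∑ j ∈ Finset.Icc (n+1) (2*n+1), ((2*n+1).choose j : ℝ) * q^j * (1-q)^(2*n+1-j)

/-- Upper branch of `q(1-q) = r`. -/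
noncomputable def qPlus (r : ℝ) : ℝ := (1 + Real.sqrt (1 - 4*r)) / 2

/-- Lower branch of `q(1-q) = r`. -/
noncomputable def qMinus (r : ℝ) : ℝ := (1 - Real.sqrt (1 - 4*r)) / 2

theorem continuous_majP (n : ℕ) : Continuous (majP n) := by
  unfold majP
  fun_prop

theorem majP_one_sub (n : ℕ) (q : ℝ) :
    majP n (1 - q) =
      ∑ j ∈ Finset.range (n + 1), ((2*n+1).choose j : ℝ) * q^j * (1-q)^(2*n+1-j) := by
  apply Finset.sum_nbij' (fun j => 2*n+1-j) (fun j => 2*n+1-j)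
  all_goals intro j hj; simp only [Finset.mem_Icc, Finset.mem_range] at hj ⊢
  · omega
  · omega
  · omega
  · omega
  · rw [Nat.choose_symm (by omega), Nat.sub_sub_self (by omega), sub_sub_cancel]
    ring

theorem majP_add_majP_one_sub (n : ℕ) (q : ℝ) : majP n q + majP n (1 - q) = 1 := by
  have hsplit := Finset.sum_range_add_sum_Ico
    (fun j => ((2*n+1).choose j : ℝ) * q^j * (1-q)^(2*n+1-j)) (by omega : n + 1 ≤ 2*n+1+1)
  rw [majP_one_sub, majP, ← Finset.Ico_add_one_right_eq_Icc, add_comm, hsplit]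
  calc _ = (q + (1 - q)) ^ (2*n+1) := by
        rw [add_pow]; exact Finset.sum_congr rfl fun j _ => by ring
    _ = 1 := by simp

theorem integral_majP_mul_eq_zero_of_symm {g : ℝ → ℝ} (n : ℕ)
    (hg : IntervalIntegrable g volume 0 1) (hsymm : ∀ q, g (1 - q) = g q)
    (hmean : ∫ q in (0:ℝ)..1, g q = 0) :
    ∫ q in (0:ℝ)..1, majP n q * g q = 0 := by
  have hint : IntervalIntegrable (fun q => majP n q * g q) volume 0 1 :=
    hg.continuousOn_mul (continuous_majP n).continuousOn
  have hreflect : ∫ q in (0:ℝ)..1, majP n q * g q =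
      (∫ q in (0:ℝ)..1, g q) - ∫ q in (0:ℝ)..1, majP n q * g q :=
    calc ∫ q in (0:ℝ)..1, majP n q * g q
        = ∫ q in (0:ℝ)..1, majP n (1 - q) * g (1 - q) := by
          rw [intervalIntegral.integral_comp_sub_left (fun q => majP n q * g q)]
          norm_num
      _ = ∫ q in (0:ℝ)..1, (g q - majP n q * g q) := by
          congr 1 with q
          rw [hsymm]
          linear_combination g q * majP_add_majP_one_sub n q
      _ = _ := intervalIntegral.integral_sub hg hint
  linarith

theorem integral_majP_mul_add_eq_of_symm {f g : ℝ → ℝ} (n : ℕ)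
    (hf : IntervalIntegrable f volume 0 1) (hg : IntervalIntegrable g volume 0 1)
    (hsymm : ∀ q, g (1 - q) = g q) (hmean : ∫ q in (0:ℝ)..1, g q = 0) :
    ∫ q in (0:ℝ)..1, majP n q * (f q + g q) = ∫ q in (0:ℝ)..1, majP n q * f q := by
  have hcont := (continuous_majP n).continuousOn (s := Set.uIcc 0 1)
  simp only [mul_add]
  rw [intervalIntegral.integral_add (hf.continuousOn_mul hcont) (hg.continuousOn_mul hcont),
    integral_majP_mul_eq_zero_of_symm n hg hsymm hmean, add_zero]

theorem integral_quadratic_zero_one {f : ℝ → ℝ} (a b c : ℝ) (hf : ∀ q, f q = a + b*q + c*q^2) :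
    ∫ q in (0:ℝ)..1, f q = a + b/2 + c/3 := by
  have hderiv : ∀ x ∈ Set.uIcc (0:ℝ) 1,
      HasDerivAt (fun q : ℝ => a*q + b*q^2/2 + c*q^3/3) (f x) x := by
    intro x _
    exact ((((hasDerivAt_id x).const_mul a).add
      (((hasDerivAt_pow 2 x).const_mul b).div_const 2)).add
      (((hasDerivAt_pow 3 x).const_mul c).div_const 3)).congr_deriv (by rw [hf]; ring)
  have hcont : Continuous f := by
    rw [funext hf]
    fun_prop
  rw [intervalIntegral.integral_eq_sub_of_hasDerivAt hderiv (hcont.intervalIntegrable 0 1)]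
  ring

theorem setIntegral_Icc_eq_intervalIntegral {a b : ℝ} (hab : a ≤ b) (g : ℝ → ℝ) :
    ∫ q in Set.Icc a b, g q = ∫ q in a..b, g q := by
  rw [integral_Icc_eq_integral_Ioc, intervalIntegral.integral_of_le hab]

/-- Two different densities on `[0,1]` with identical branch asymmetry
`(1/2)√(1−4r)`, hence identical odd-budget majority voting curves. -/
theorem stmt14 :
    let f₁ : ℝ → ℝ := fun q => 1 + (2*q - 1)/4
    let f₂ : ℝ → ℝ := fun q => 1 + (2*q - 1)/4 + 4*(q*(1-q) - 1/6)
    ((∀ q ∈ Set.Icc (0:ℝ) 1, 0 ≤ f₁ q) ∧ ∫ q in Set.Icc (0:ℝ) 1, f₁ q = 1) ∧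
    ((∀ q ∈ Set.Icc (0:ℝ) 1, 0 ≤ f₂ q) ∧ ∫ q in Set.Icc (0:ℝ) 1, f₂ q = 1) ∧
    (∀ r ∈ Set.Ico (0:ℝ) (1/4),
      f₁ (qPlus r) - f₁ (qMinus r) = (1/2) * Real.sqrt (1 - 4*r) ∧
      f₂ (qPlus r) - f₂ (qMinus r) = (1/2) * Real.sqrt (1 - 4*r)) ∧
    (∀ n : ℕ, ∫ q in Set.Icc (0:ℝ) 1, majP n q * f₁ q = ∫ q in Set.Icc (0:ℝ) 1, majP n q * f₂ q) ∧
    ¬ (∀ q ∈ Set.Icc (0:ℝ) 1, f₁ q = f₂ q) := by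
  intro f₁ f₂
  simp only [setIntegral_Icc_eq_intervalIntegral zero_le_one]
  refine ⟨⟨?_, ?_⟩, ⟨?_, ?_⟩, ?_, ?_, ?_⟩
  · rintro q ⟨hq0, -⟩
    simp only [f₁]
    linarith
  · exact (integral_quadratic_zero_one (3/4) (1/2) 0 fun q => by ring).trans (by norm_num)
  · rintro q ⟨hq0, hq1⟩
    simp only [f₂]
    nlinarith [mul_nonneg hq0 (sub_nonneg.mpr hq1)]
  · exact (integral_quadratic_zero_one (1/12) (9/2) (-4) fun q => by ring).trans (by norm_num)
  · intro r _
    constructor <;> (simp only [f₁, f₂, qPlus, qMinus]; ring)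
  · intro n
    refine (integral_majP_mul_add_eq_of_symm n ?_ ?_ (fun q => by ring) ?_).symm
    · exact (by fun_prop : Continuous f₁).intervalIntegrable 0 1
    · exact (by fun_prop : Continuous fun q : ℝ => 4*(q*(1-q) - 1/6)).intervalIntegrable 0 1
    · exact (integral_quadratic_zero_one (-2/3) 4 (-4) fun q => by ring).trans (by norm_num)
  · intro h
    have h0 := h 0 ⟨le_rfl, zero_le_one⟩
    norm_num [f₁, f₂] at h0
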